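/- arXiv:2404.13651 — 5 statements merged into one kernel-verified Lean document; each statement's English description precedes it below -/
import Mathlib

section
/- Let B be the K×K matrix with B_{k,k'} = 1 if k' = k+ (the lowest class in H_+(k)) and 0 otherwise, and let F be the K×K matrix with F_{k,k'} = 1 if k' ∈ H(k) and 0 otherwise. Then F(I − B) = I, i.e., F is the inverse of I − B. -/
open Finset

/-- With `H k` the set of classes at the same station as `k`
with priority at least as high, `B` the 0-1 matrix with `B k k' = 1` iff
`H k' = H k \ {k}` (i.e. `k' = k+`), and `F` the 0-1 matrix with
`F k k' = 1` iff `k' ∈ H k`, we have `F (I - B) = I`. -/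
theorem stmt_0 {K : ℕ} {S : Type*} [DecidableEq S]
    (s : Fin K → S) (p : Fin K → Fin K) (hp : Function.Bijective p)
    (H : Fin K → Finset (Fin K))
    (hH : ∀ k, H k = Finset.univ.filter fun k' => s k' = s k ∧ p k' ≤ p k)
    (B F : Matrix (Fin K) (Fin K) ℝ)
    (hB : ∀ k k', B k k' = if H k' = (H k).erase k then 1 else 0)
    (hF : ∀ k k', F k k' = if k' ∈ H k then 1 else 0) :
    F * (1 - B) = 1 := by
  have hpinj : Function.Injective p := hp.injective
  have hmem : ∀ k m, m ∈ H k ↔ s m = s k ∧ p m ≤ p k := by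
    intro k m; rw [hH]; simp
  have hself : ∀ k, k ∈ H k := by
    intro k; rw [hmem]; exact ⟨rfl, le_refl _⟩
  ext k j
  rw [Matrix.mul_apply, Matrix.one_apply]
  have hsum : ∀ x : Fin K, F k x * (1 - B) x j
      = (if x ∈ H k then (1:ℝ) else 0) * (if x = j then (1:ℝ) else 0)
        - (if x ∈ H k ∧ H j = (H x).erase x then (1:ℝ) else 0) := by
    intro x
    rw [Matrix.sub_apply, Matrix.one_apply, hF, hB, mul_sub]
    congr 1
    by_cases h1 : x ∈ H k <;> by_cases h2 : H j = (H x).erase x <;>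
      simp [h1, h2]
  rw [Finset.sum_congr rfl (fun x _ => hsum x), Finset.sum_sub_distrib]
  have h1 : ∑ x : Fin K, (if x ∈ H k then (1:ℝ) else 0) * (if x = j then (1:ℝ) else 0)
      = if j ∈ H k then 1 else 0 := by
    rw [Finset.sum_eq_single j]
    · simp
    · intro b _ hb; simp [hb]
    · intro h; exact absurd (Finset.mem_univ j) h
  rw [h1]
  -- key claim: any witness x of the second sum forces j ∈ (H k).erase k and is unique
  have key : ∀ x : Fin K, x ∈ H k → H j = (H x).erase x → j ∈ (H k).erase k ∧
      (∀ y : Fin K, y ∈ H k → H j = (H y).erase y → y = x) := by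
    intro x hx hxj
    have hjx : j ∈ (H x).erase x := hxj ▸ hself j
    obtain ⟨hjne, hjHx⟩ := Finset.mem_erase.mp hjx
    obtain ⟨hsxk, hpxk⟩ := (hmem k x).mp hx
    obtain ⟨hsjx, hpjx⟩ := (hmem x j).mp hjHx
    have hpjltx : p j < p x := lt_of_le_of_ne hpjx (fun h => hjne (hpinj h))
    have hjk : j ∈ H k := (hmem k j).mpr ⟨hsjx.trans hsxk, le_trans hpjx hpxk⟩
    constructor
    · refine Finset.mem_erase.mpr ⟨fun hjk' => ?_, hjk⟩
      -- if j = k then p x ≤ p k = p j < p x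
      subst hjk'
      exact absurd hpjltx (not_lt_of_ge hpxk)
    · intro y hy hyj
      by_contra hne
      have hjy : j ∈ (H y).erase y := hyj ▸ hself j
      obtain ⟨hjney, hjHy⟩ := Finset.mem_erase.mp hjy
      obtain ⟨hsjy, hpjy⟩ := (hmem y j).mp hjHy
      have hpjlty : p j < p y := lt_of_le_of_ne hpjy (fun h => hjney (hpinj h))
      have hpne : p y ≠ p x := fun h => hne (hpinj h)
      rcases lt_or_gt_of_ne hpne with hlt | hgt
      · have : y ∈ (H x).erase x :=
          Finset.mem_erase.mpr ⟨fun h => hpne (congrArg p h),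
            (hmem x y).mpr ⟨hsjy.symm.trans hsjx, le_of_lt hlt⟩⟩
        rw [← hxj, hmem] at this
        exact absurd this.2 (not_le_of_gt hpjlty)
      · have : x ∈ (H y).erase y :=
          Finset.mem_erase.mpr ⟨fun h => hpne (congrArg p h).symm,
            (hmem y x).mpr ⟨hsjx.symm.trans hsjy, le_of_lt hgt⟩⟩
        rw [← hyj, hmem] at this
        exact absurd this.2 (not_le_of_gt hpjltx)
  -- existence: if j ∈ (H k).erase k, there is a witness
  have exi : j ∈ (H k).erase k → ∃ x : Fin K, x ∈ H k ∧ H j = (H x).erase x := by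
    intro hjm
    obtain ⟨hjne, hjk⟩ := Finset.mem_erase.mp hjm
    obtain ⟨hsjk, hpjk⟩ := (hmem k j).mp hjk
    have hpjltk : p j < p k := lt_of_le_of_ne hpjk (fun h => hjne (hpinj h))
    set T : Finset (Fin K) :=
      Finset.univ.filter (fun m => s m = s j ∧ p j < p m ∧ p m ≤ p k) with hT
    have hkT : k ∈ T := by
      simp only [hT, Finset.mem_filter, Finset.mem_univ, true_and]
      exact ⟨hsjk.symm, hpjltk, le_refl _⟩
    have hT'ne : (T.image p).Nonempty := ⟨p k, Finset.mem_image_of_mem p hkT⟩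
    obtain ⟨x0, hx0T, hpx0⟩ := Finset.mem_image.mp ((T.image p).min'_mem hT'ne)
    simp only [hT, Finset.mem_filter, Finset.mem_univ, true_and] at hx0T
    obtain ⟨hsx0, hpjx0, hpx0k⟩ := hx0T
    refine ⟨x0, (hmem k x0).mpr ⟨hsx0.trans hsjk, hpx0k⟩, ?_⟩
    ext m
    rw [Finset.mem_erase, hmem, hmem]
    constructor
    · rintro ⟨hsm, hpm⟩
      have hpmlt : p m < p x0 := lt_of_le_of_lt hpm hpjx0
      exact ⟨fun h => absurd (h ▸ hpmlt) (lt_irrefl _),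
        ⟨hsm.trans hsx0.symm, le_of_lt hpmlt⟩⟩
    · rintro ⟨hmne, hsm, hpm⟩
      have hpmlt : p m < p x0 := lt_of_le_of_ne hpm (fun h => hmne (hpinj h))
      refine ⟨hsm.trans hsx0, ?_⟩
      by_contra hc
      have hjm' : p j < p m := lt_of_not_ge hc
      have hmT : m ∈ T := by
        simp only [hT, Finset.mem_filter, Finset.mem_univ, true_and]
        exact ⟨hsm.trans hsx0, hjm', le_trans (le_of_lt hpmlt) hpx0k⟩
      have : (T.image p).min' hT'ne ≤ p m :=
        Finset.min'_le _ _ (Finset.mem_image_of_mem p hmT)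
      rw [← hpx0] at this
      exact absurd hpmlt (not_lt_of_ge this)
  -- evaluate second sum
  have h2 : ∑ x : Fin K, (if x ∈ H k ∧ H j = (H x).erase x then (1:ℝ) else 0)
      = if j ∈ (H k).erase k then 1 else 0 := by
    by_cases hj : j ∈ (H k).erase k
    · obtain ⟨x0, hx01, hx02⟩ := exi hj
      rw [if_pos hj, Finset.sum_eq_single x0]
      · simp [hx01, hx02]
      · intro b _ hb
        rw [if_neg]
        rintro ⟨hb1, hb2⟩
        exact hb ((key x0 hx01 hx02).2 b hb1 hb2)
      · intro h; exact absurd (Finset.mem_univ x0) h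
    · rw [if_neg hj, Finset.sum_eq_zero]
      intro x _
      rw [if_neg]
      rintro ⟨hx1, hx2⟩
      exact hj (key x hx1 hx2).1
  rw [h2]
  by_cases hkj : k = j
  · subst hkj
    simp [hself k, Finset.mem_erase]
  · rw [if_neg hkj]
    by_cases hjk : j ∈ H k
    · rw [if_pos hjk, if_pos (Finset.mem_erase.mpr ⟨fun h => hkj h.symm, hjk⟩), sub_self]
    · rw [if_neg hjk, if_neg (fun h => hjk (Finset.mem_erase.mp h).2), sub_self]
end

section
/- For a 2×2 real matrix R with R_{11} > 0 and R_{22} > 0, if R_{12} < 0 and R_{21} > 0 (or symmetrically R_{12} > 0 and R_{21} < 0), then for every positive vector b ∈ ℝ², the pair (R,b) is a tight system. -/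
/-- `(R, b)` is a tight system: the only solution of the tight-system
constraints is the all-ones solution. -/
def IsTightSystem {d : ℕ} (R : Matrix (Fin d) (Fin d) ℝ) (b : Fin d → ℝ) : Prop :=
  ∀ (x : Finset (Fin d) → ℝ) (xj : Fin d → Finset (Fin d) → ℝ),
    (∀ D, x D ∈ Set.Icc (0 : ℝ) 1) →
    (∀ (D : Finset (Fin d)) (i : Fin d), i ∈ D →
      ∑ j, R i j * b j * (xj j D - x D) = 0) →
    (∀ D D' : Finset (Fin d), D ⊆ D' → x D' ≤ x D) →
    (∀ (j : Fin d) (D D' : Finset (Fin d)), D ⊆ D' → xj j D' ≤ xj j D) →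
    (∀ (j : Fin d) (D : Finset (Fin d)), j ∈ D → xj j D = xj j (D.erase j)) →
    x ∅ = 1 →
    (∀ j, xj j ∅ = 1) →
    (∀ D, x D = 1) ∧ (∀ j D, xj j D = 1)

lemma key_aux (a c s t : ℝ) (ha : 0 < a) (hc : c < 0) (hts : t ≤ s) (hs1 : s ≤ 1)
    (he : a * (1 - s) + c * (t - s) = 0) : s = 1 ∧ t = 1 := by
  have hs : s = 1 := by nlinarith
  subst hs
  have ht : t = 1 := by nlinarith
  exact ⟨rfl, ht⟩

/-- A 2×2 matrix with positive diagonal and off-diagonal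
entries of strictly opposite signs is tight for every positive `b`. -/
theorem stmt_2 (R : Matrix (Fin 2) (Fin 2) ℝ)
    (h11 : 0 < R 0 0) (h22 : 0 < R 1 1)
    (hoff : (R 0 1 < 0 ∧ 0 < R 1 0) ∨ (0 < R 0 1 ∧ R 1 0 < 0)) :
    ∀ b : Fin 2 → ℝ, (∀ j, 0 < b j) → IsTightSystem R b := by
  intro b hb x xj hbox heq hmono hmonoj herase hx0 hxj0
  have hdet : 0 < R 0 0 * R 1 1 - R 0 1 * R 1 0 := by
    rcases hoff with ⟨h1, h2⟩ | ⟨h1, h2⟩ <;> nlinarith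
  -- the equations at D = univ
  have eU0 := heq Finset.univ 0 (Finset.mem_univ _)
  have eU1 := heq Finset.univ 1 (Finset.mem_univ _)
  rw [Fin.sum_univ_two] at eU0 eU1
  have hpos : 0 < (R 0 0 * R 1 1 - R 0 1 * R 1 0) * (b 0 * b 1) :=
    mul_pos hdet (mul_pos (hb 0) (hb 1))
  have h1 : (R 0 0 * R 1 1 - R 0 1 * R 1 0) * (b 0 * b 1) *
      (xj 0 Finset.univ - x Finset.univ) = 0 := by
    linear_combination R 1 1 * b 1 * eU0 - R 0 1 * b 1 * eU1
  have h2 : (R 0 0 * R 1 1 - R 0 1 * R 1 0) * (b 0 * b 1) *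
      (xj 1 Finset.univ - x Finset.univ) = 0 := by
    linear_combination R 0 0 * b 0 * eU1 - R 1 0 * b 0 * eU0
  have hu : xj 0 Finset.univ = x Finset.univ := by
    have := (mul_eq_zero.mp h1).resolve_left hpos.ne'
    linarith
  have hv : xj 1 Finset.univ = x Finset.univ := by
    have := (mul_eq_zero.mp h2).resolve_left hpos.ne'
    linarith
  -- erase relations at univ
  have he0 : xj 0 Finset.univ = xj 0 {1} := by
    have := herase 0 Finset.univ (Finset.mem_univ _)
    rwa [show (Finset.univ : Finset (Fin 2)).erase 0 = {1} from by decide] at this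
  have he1 : xj 1 Finset.univ = xj 1 {0} := by
    have := herase 1 Finset.univ (Finset.mem_univ _)
    rwa [show (Finset.univ : Finset (Fin 2)).erase 1 = {0} from by decide] at this
  -- it suffices to show x univ = 1
  suffices hXU : x Finset.univ = 1 by
    constructor
    · intro D
      have ha := hmono D Finset.univ (Finset.subset_univ D)
      have hb' := hmono ∅ D (Finset.empty_subset D)
      linarith
    · intro j D
      have ha := hmonoj j D Finset.univ (Finset.subset_univ D)
      have hb' := hmonoj j ∅ D (Finset.empty_subset D)
      have hc := hxj0 j
      have hjU : xj j Finset.univ = 1 := by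
        fin_cases j
        · exact hu.trans hXU
        · exact hv.trans hXU
      linarith
  rcases hoff with ⟨ho1, ho2⟩ | ⟨ho1, ho2⟩
  · -- R 0 1 < 0 < R 1 0 : use the equation at D = {0}, i = 0
    have e := heq {0} 0 (by decide)
    rw [Fin.sum_univ_two] at e
    have hxj00 : xj 0 ({0} : Finset (Fin 2)) = 1 := by
      have := herase 0 {0} (by decide)
      rwa [show ({0} : Finset (Fin 2)).erase 0 = ∅ from by decide, hxj0 0] at this
    have hxj10 : xj 1 ({0} : Finset (Fin 2)) = x Finset.univ := by rw [← he1, hv]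
    have hm : x Finset.univ ≤ x {0} := hmono {0} Finset.univ (Finset.subset_univ _)
    have hs1 : x ({0} : Finset (Fin 2)) ≤ 1 := by
      have := hmono ∅ {0} (Finset.empty_subset _); linarith
    have hk := key_aux (R 0 0 * b 0) (R 0 1 * b 1) (x {0}) (x Finset.univ)
      (mul_pos h11 (hb 0)) (mul_neg_of_neg_of_pos ho1 (hb 1)) hm hs1
      (by linear_combination e - R 0 0 * b 0 * hxj00 - R 0 1 * b 1 * hxj10)
    exact hk.2
  · -- R 1 0 < 0 < R 0 1 : use the equation at D = {1}, i = 1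
    have e := heq {1} 1 (by decide)
    rw [Fin.sum_univ_two] at e
    have hxj11 : xj 1 ({1} : Finset (Fin 2)) = 1 := by
      have := herase 1 {1} (by decide)
      rwa [show ({1} : Finset (Fin 2)).erase 1 = ∅ from by decide, hxj0 1] at this
    have hxj01 : xj 0 ({1} : Finset (Fin 2)) = x Finset.univ := by rw [← he0, hu]
    have hm : x Finset.univ ≤ x {1} := hmono {1} Finset.univ (Finset.subset_univ _)
    have hs1 : x ({1} : Finset (Fin 2)) ≤ 1 := by
      have := hmono ∅ {1} (Finset.empty_subset _); linarith
    have hk := key_aux (R 1 1 * b 1) (R 1 0 * b 0) (x {1}) (x Finset.univ)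
      (mul_pos h22 (hb 1)) (mul_neg_of_neg_of_pos ho2 (hb 0)) hm hs1
      (by linear_combination e - R 1 1 * b 1 * hxj11 - R 1 0 * b 0 * hxj01)
    exact hk.2
end

section
/- For a 2×2 real matrix R with R_{11} > 0, R_{22} > 0, R_{12} > 0 and R_{21} > 0, and for any positive vector b ∈ ℝ², the pair (R,b) is NOT a tight system: for every ε ∈ (0,1), setting α₁ = R_{12}b₂/(R_{11}b₁), α₂ = R_{21}b₁/(R_{22}b₂), x_{\{1\}} = (εα₁+1)/(α₁+1), x_{\{2\}} = (εα₂+1)/(α₂+1), x_{\{1,2\}} = x^{(1)}_{\{2\}} = x^{(2)}_{\{1\}} = ε (with x^{(1)}_{\{1\}} = x^{(2)}_{\{2\}} determined by condition (iii), and x^{(j)}_{\{1,2\}} determined consistently) gives a nontrivial solution of the tight-system equations. -/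
/-- A 2×2 matrix with all entries positive is not tight:
for every positive `b`, the pair `(R, b)` is not a tight system. -/
theorem stmt_3 (R : Matrix (Fin 2) (Fin 2) ℝ)
    (h11 : 0 < R 0 0) (h22 : 0 < R 1 1)
    (h12 : 0 < R 0 1) (h21 : 0 < R 1 0)
    (b : Fin 2 → ℝ) (hb : ∀ j, 0 < b j) :
    ¬ IsTightSystem R b := by
  intro H
  have hb0 := hb 0
  have hb1 := hb 1
  have hc0 : (0:ℝ) < R 0 0 * b 0 := by positivity
  have hc1 : (0:ℝ) < R 0 1 * b 1 := by positivity
  have hd0 : (0:ℝ) < R 1 0 * b 0 := by positivity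
  have hd1 : (0:ℝ) < R 1 1 * b 1 := by positivity
  have hcs : (0:ℝ) < R 0 1 * b 1 + R 0 0 * b 0 := by linarith
  have hds : (0:ℝ) < R 1 0 * b 0 + R 1 1 * b 1 := by linarith
  -- the candidate solution
  set X : Finset (Fin 2) → ℝ := fun D =>
    if D = ∅ then 1
    else if D = {0} then (R 0 1 * b 1 / 2 + R 0 0 * b 0) / (R 0 1 * b 1 + R 0 0 * b 0)
    else if D = {1} then (R 1 0 * b 0 / 2 + R 1 1 * b 1) / (R 1 0 * b 0 + R 1 1 * b 1)
    else 1/2 with hX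
  set XJ : Fin 2 → Finset (Fin 2) → ℝ := fun j D =>
    if (if j = 0 then (1 : Fin 2) else 0) ∈ D then 1/2 else 1 with hXJ
  have hcases : ∀ D : Finset (Fin 2), D = ∅ ∨ D = {0} ∨ D = {1} ∨ D = {0,1} := by decide
  have ne1 : ({0} : Finset (Fin 2)) ≠ ∅ := by decide
  have ne2 : ({1} : Finset (Fin 2)) ≠ ∅ := by decide
  have ne3 : ({1} : Finset (Fin 2)) ≠ {0} := by decide
  have ne4 : ({0,1} : Finset (Fin 2)) ≠ ∅ := by decide
  have ne5 : ({0,1} : Finset (Fin 2)) ≠ {0} := by decide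
  have ne6 : ({0,1} : Finset (Fin 2)) ≠ {1} := by decide
  -- value facts
  have hXe : X ∅ = 1 := by rw [hX]; simp
  have hX0 : X {0} = (R 0 1 * b 1 / 2 + R 0 0 * b 0) / (R 0 1 * b 1 + R 0 0 * b 0) := by
    rw [hX]; simp [ne1]
  have hX1 : X {1} = (R 1 0 * b 0 / 2 + R 1 1 * b 1) / (R 1 0 * b 0 + R 1 1 * b 1) := by
    rw [hX]; simp [ne2, ne3]
  have hX01 : X {0,1} = 1/2 := by
    rw [hX]; simp [ne4, ne5, ne6]
  have hX0mem : 1/2 ≤ X {0} ∧ X {0} ≤ 1 := by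
    rw [hX0]
    constructor
    · rw [le_div_iff₀ hcs]; linarith
    · rw [div_le_one hcs]; linarith
  have hX1mem : 1/2 ≤ X {1} ∧ X {1} ≤ 1 := by
    rw [hX1]
    constructor
    · rw [le_div_iff₀ hds]; linarith
    · rw [div_le_one hds]; linarith
  have hXle1 : ∀ D, X D ≤ 1 := by
    intro D
    rcases hcases D with h | h | h | h <;> subst h
    · rw [hXe]
    · exact hX0mem.2
    · exact hX1mem.2
    · rw [hX01]; norm_num
  have hXlo : ∀ D, 1/2 ≤ X D := by
    intro D
    rcases hcases D with h | h | h | h <;> subst h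
    · rw [hXe]; norm_num
    · exact hX0mem.1
    · exact hX1mem.1
    · rw [hX01]
  -- XJ values
  have hJ00 : XJ 0 {0} = 1 := by rw [hXJ]; norm_num
  have hJ10 : XJ 1 {0} = 1/2 := by rw [hXJ]; norm_num
  have hJ01 : XJ 0 {1} = 1/2 := by rw [hXJ]; norm_num
  have hJ11 : XJ 1 {1} = 1 := by rw [hXJ]; norm_num
  have hJ0b : XJ 0 {0,1} = 1/2 := by rw [hXJ]; norm_num
  have hJ1b : XJ 1 {0,1} = 1/2 := by rw [hXJ]; norm_num
  have key := H X XJ ?_ ?_ ?_ ?_ ?_ ?_ ?_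
  · have := key.1 {0,1}
    rw [hX01] at this
    norm_num at this
  · -- 0 ≤ X D ≤ 1
    intro D
    exact ⟨by linarith [hXlo D], hXle1 D⟩
  · -- the linear equations
    intro D i hi
    rcases hcases D with h | h | h | h <;> subst h
    · simp at hi
    · have hi0 : i = 0 := Finset.mem_singleton.mp hi
      subst hi0
      rw [Fin.sum_univ_two, hJ00, hJ10, hX0]
      field_simp
      ring
    · have hi1 : i = 1 := Finset.mem_singleton.mp hi
      subst hi1
      rw [Fin.sum_univ_two, hJ01, hJ11, hX1]
      field_simp
      ring
    · fin_cases i <;> rw [Fin.sum_univ_two, hJ0b, hJ1b, hX01] <;> ring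
  · -- monotonicity of X
    intro D D' hsub
    rcases hcases D with h | h | h | h <;> subst h
    · rw [hXe]; exact hXle1 D'
    · rcases hcases D' with h' | h' | h' | h' <;> subst h'
      · exact absurd hsub (by decide)
      · exact le_refl _
      · exact absurd hsub (by decide)
      · rw [hX01]; exact hX0mem.1
    · rcases hcases D' with h' | h' | h' | h' <;> subst h'
      · exact absurd hsub (by decide)
      · exact absurd hsub (by decide)
      · exact le_refl _
      · rw [hX01]; exact hX1mem.1
    · rcases hcases D' with h' | h' | h' | h' <;> subst h'
      · exact absurd hsub (by decide)
      · exact absurd hsub (by decide)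
      · exact absurd hsub (by decide)
      · exact le_refl _
  · -- monotonicity of XJ
    intro j D D' hsub
    rw [hXJ]
    simp only
    by_cases h1 : (if j = 0 then (1 : Fin 2) else 0) ∈ D'
    · rw [if_pos h1]
      split_ifs <;> norm_num
    · rw [if_neg h1, if_neg (fun h => h1 (hsub h))]
  · -- condition (iii)
    intro j D hj
    rw [hXJ]
    simp only
    have hne : (if j = 0 then (1 : Fin 2) else 0) ≠ j := by fin_cases j <;> decide
    by_cases hm : (if j = 0 then (1 : Fin 2) else 0) ∈ D
    · rw [if_pos hm, if_pos (Finset.mem_erase.mpr ⟨hne, hm⟩)]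
    · rw [if_neg hm, if_neg (fun h => hm (Finset.mem_erase.mp h).2)]
  · rw [hXe]
  · intro j; rw [hXJ]; simp
end

section
/- Let R be a d×d P-matrix such that R_{ii} > 0 for all i, R_{i,i−1} < 0 for 2 ≤ i ≤ d, and R_{ij} = 0 for j ≤ i−2 (entries above the superdiagonal R_{ij} for j ≥ i+1 are arbitrary). Then R is a tight matrix: for every positive vector b ∈ ℝ^d, (R,b) is a tight system. -/
/-- `R` is a P-matrix: all principal minors are positive. -/
def IsPMatrix {d : ℕ} (R : Matrix (Fin d) (Fin d) ℝ) : Prop :=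
  ∀ D : Finset (Fin d), D.Nonempty →
    0 < (R.submatrix (fun i : D => (i : Fin d)) (fun j : D => (j : Fin d))).det

/-!
Write `S a = {a, …, d - 1}` and `w k = b k * (xj k (S a) - x (S a))`. Because `R` vanishes below
the subdiagonal, the equations for `D = S a` say `R[S a] w = c • eₐ`, where `c` is the single
term coming from column `a - 1`. For a lower Hessenberg P-matrix with negative subdiagonal the
column of the inverse at `a` is positive: eliminate the last unknown through the last row,
which expresses it as a positive multiple of the previous one, and induct; the column operation
keeps the P-property because it preserves the minors and leaves the last row `(0, …, 0, Rₑₑ)`.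
So `w = c • v` with `v > 0`. Going up in `a`, `xj (a-1) (S a) = xj (a-1) (S (a-1)) ≤ x (S (a-1))
≤ x (S a)` gives `c ≤ 0`. Going down from `S d = ∅`, `xj a (S a) = xj a (S (a+1)) = 1` makes
`w a ≥ 0`, hence `c = 0`, `w = 0` and everything on `S a` equals one. Monotonicity spreads this
from `S 0 = univ` to all sets.
-/

open Finset

-- Matrices are indexed by `ℕ` so that the windows `Ico a e` can shrink freely in the induction.
def principalSubmatrix (A : ℕ → ℕ → ℝ) (D : Finset ℕ) : Matrix D D ℝ :=
  Matrix.of fun p q => A p q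

def addColumn (A : ℕ → ℕ → ℝ) (j j' : ℕ) (ρ : ℝ) : ℕ → ℕ → ℝ :=
  fun i k => if k = j then A i j + ρ * A i j' else A i k

section principalSubmatrix

variable {A : ℕ → ℕ → ℝ} {D : Finset ℕ}

lemma det_principalSubmatrix_singleton (A : ℕ → ℕ → ℝ) (i : ℕ) :
    (principalSubmatrix A {i}).det = A i i :=
  Matrix.det_unique _

lemma det_principalSubmatrix_insert {n : ℕ} (hn : n ∉ D) (hrow : ∀ k ∈ D, A n k = 0) :
    (principalSubmatrix A (insert n D)).det = (principalSubmatrix A D).det * A n n := by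
  let e : D ⊕ Unit ≃ ↥(insert n D) :=
    ((subtypeInsertEquivOption hn).trans (Equiv.optionEquivSumPUnit _)).symm
  have hblocks : (principalSubmatrix A (insert n D)).submatrix e e =
      Matrix.fromBlocks (principalSubmatrix A D) (Matrix.of fun p _ => A p n) 0
        (Matrix.of fun _ _ => A n n) := by
    ext (p | _) (q | _)
    · rfl
    · rfl
    · exact hrow q q.2
    · rfl
  rw [← Matrix.det_submatrix_equiv_self e, hblocks, Matrix.det_fromBlocks_zero₂₁]
  exact congrArg _ (Matrix.det_unique _)

lemma det_principalSubmatrix_addColumn {j j' : ℕ} (ρ : ℝ) (hj : j ∈ D) (hj' : j' ∈ D)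
    (hne : j ≠ j') :
    (principalSubmatrix (addColumn A j j' ρ) D).det = (principalSubmatrix A D).det := by
  set M := principalSubmatrix A D
  have hcol : principalSubmatrix (addColumn A j j' ρ) D =
      M.updateCol ⟨j, hj⟩ fun k => M k ⟨j, hj⟩ + ρ • M k ⟨j', hj'⟩ := by
    ext p q
    by_cases hq : (q : ℕ) = j <;>
      simp [M, principalSubmatrix, addColumn, Matrix.updateCol_apply, hq, Subtype.ext_iff]
  rw [hcol, Matrix.det_updateCol_add_smul_self M (by simpa using hne)]

lemma principalSubmatrix_addColumn_of_notMem {j j' : ℕ} (ρ : ℝ) (hj : j ∉ D) :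
    principalSubmatrix (addColumn A j j' ρ) D = principalSubmatrix A D := by
  ext p q
  have hq : (q : ℕ) ≠ j := fun h => hj (h ▸ q.2)
  simp [principalSubmatrix, addColumn, hq]

lemma eqOn_of_sum_mul_eq (hA : (principalSubmatrix A D).det ≠ 0) {u v : ℕ → ℝ}
    (h : ∀ i ∈ D, ∑ k ∈ D, A i k * u k = ∑ k ∈ D, A i k * v k) :
    Set.EqOn u v D := by
  have hzero : (principalSubmatrix A D).mulVec (fun k : D => u k - v k) = 0 := by
    ext i
    simp only [Matrix.mulVec, dotProduct, principalSubmatrix, Matrix.of_apply, mul_sub,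
      sum_sub_distrib, Pi.zero_apply, sub_eq_zero]
    simpa only [sum_coe_sort D fun k => A i k * u k, sum_coe_sort D fun k => A i k * v k]
      using h i i.2
  intro k hk
  simpa [sub_eq_zero] using congrFun (Matrix.eq_zero_of_mulVec_eq_zero hA hzero) ⟨k, hk⟩

lemma sum_addColumn_mul {a m : ℕ} (ham : a ≤ m) (ρ : ℝ) (v : ℕ → ℝ) (i : ℕ) :
    ∑ k ∈ Ico a (m + 1), addColumn A m (m + 1) ρ i k * v k =
      ∑ k ∈ Ico a (m + 2), A i k * Function.update v (m + 1) (ρ * v m) k := by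
  rw [sum_Ico_succ_top (by omega : a ≤ m + 1), Function.update_self]
  have hterm : ∀ k ∈ Ico a (m + 1), addColumn A m (m + 1) ρ i k * v k =
      A i k * Function.update v (m + 1) (ρ * v m) k +
        if k = m then A i (m + 1) * (ρ * v m) else 0 := by
    intro k hk
    rw [Function.update_of_ne (by simp at hk; omega)]
    by_cases hkm : k = m
    · simp only [addColumn, hkm, if_true]; ring
    · simp only [addColumn, hkm, if_false, add_zero]
  rw [sum_congr rfl hterm, sum_add_distrib, sum_ite_eq' _ _ (fun _ => A i (m + 1) * (ρ * v m)),
    if_pos (by simp; omega)]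

end principalSubmatrix

structure IsHessenbergPMatrixOn (A : ℕ → ℕ → ℝ) (a e : ℕ) : Prop where
  det_pos : ∀ D ⊆ Ico a e, D.Nonempty → 0 < (principalSubmatrix A D).det
  subdiag_neg : ∀ k, a ≤ k → k + 1 < e → A (k + 1) k < 0
  eq_zero : ∀ i k, a ≤ k → k + 2 ≤ i → i < e → A i k = 0

namespace IsHessenbergPMatrixOn

variable {A : ℕ → ℕ → ℝ} {a e : ℕ}

lemma mono_left (hA : IsHessenbergPMatrixOn A a e) {a' : ℕ} (haa' : a ≤ a') :
    IsHessenbergPMatrixOn A a' e where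
  det_pos D hD := hA.det_pos D (hD.trans (Ico_subset_Ico_left haa'))
  subdiag_neg k hk := hA.subdiag_neg k (haa'.trans hk)
  eq_zero i k hk := hA.eq_zero i k (haa'.trans hk)

lemma diag_pos (hA : IsHessenbergPMatrixOn A a e) {k : ℕ} (hk : k ∈ Ico a e) : 0 < A k k := by
  have h := hA.det_pos {k} (singleton_subset_iff.mpr hk) (singleton_nonempty k)
  rwa [det_principalSubmatrix_singleton] at h

lemma addColumn_last_row_eq_zero {m : ℕ} {ρ : ℝ} (hA : IsHessenbergPMatrixOn A a (m + 2))
    (hρ : A (m + 1) m + ρ * A (m + 1) (m + 1) = 0) {k : ℕ} (hk : k ∈ Ico a (m + 1)) :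
    addColumn A m (m + 1) ρ (m + 1) k = 0 := by
  have hk' := mem_Ico.mp hk
  by_cases hkm : k = m
  · simpa [addColumn, hkm] using hρ
  · simp only [addColumn, if_neg hkm]
    exact hA.eq_zero _ _ hk'.1 (by omega) (by omega)

end IsHessenbergPMatrixOn

lemma isHessenbergPMatrixOn_addColumn {A : ℕ → ℕ → ℝ} {a m : ℕ} {ρ : ℝ}
    (hA : IsHessenbergPMatrixOn A a (m + 2)) (hρ : A (m + 1) m + ρ * A (m + 1) (m + 1) = 0) :
    IsHessenbergPMatrixOn (addColumn A m (m + 1) ρ) a (m + 1) where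
  det_pos D hD hne := by
    by_cases hm : m ∈ D
    · have ham : a ≤ m := (mem_Ico.mp (hD hm)).1
      have hlast : m + 1 ∉ D := fun h => by simpa using hD h
      have hdet := hA.det_pos (insert (m + 1) D)
        (insert_subset (by simp; omega) (hD.trans (Ico_subset_Ico_right (by omega))))
        (insert_nonempty _ _)
      rw [← det_principalSubmatrix_addColumn ρ (mem_insert_of_mem hm) (mem_insert_self _ _)
        (by omega), det_principalSubmatrix_insert hlast
          fun k hk => hA.addColumn_last_row_eq_zero hρ (hD hk)] at hdet
      refine pos_of_mul_pos_left hdet ?_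
      simpa [addColumn] using (hA.diag_pos (k := m + 1) (by simp; omega)).le
    · rw [principalSubmatrix_addColumn_of_notMem ρ hm]
      exact hA.det_pos D (hD.trans (Ico_subset_Ico_right (by omega))) hne
  subdiag_neg k hak hk := by
    simpa [addColumn, show k ≠ m by omega] using hA.subdiag_neg k hak (by omega)
  eq_zero i k hak hki hi := by
    simpa [addColumn, show k ≠ m by omega] using hA.eq_zero i k hak hki (by omega)

namespace IsHessenbergPMatrixOn

variable {A : ℕ → ℕ → ℝ} {a e : ℕ}

theorem exists_pos_solution (hA : IsHessenbergPMatrixOn A a e) (hae : a < e) :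
    ∃ v : ℕ → ℝ, (∀ k ∈ Ico a e, 0 < v k) ∧
      ∀ i ∈ Ico a e, ∑ k ∈ Ico a e, A i k * v k = if i = a then 1 else 0 := by
  induction e, hae using Nat.le_induction generalizing A with
  | base =>
    have haa := hA.diag_pos (k := a) (by simp)
    refine ⟨fun _ => (A a a)⁻¹, fun _ _ => inv_pos.mpr haa, fun i hi => ?_⟩
    obtain rfl : i = a := by simpa using hi
    simp [haa.ne']
  | succ n han ih =>
    obtain ⟨m, rfl⟩ : ∃ m, n = m + 1 := ⟨n - 1, by omega⟩
    have hlast := hA.diag_pos (k := m + 1) (by simp; omega)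
    set ρ := -A (m + 1) m / A (m + 1) (m + 1)
    have hρ : A (m + 1) m + ρ * A (m + 1) (m + 1) = 0 := by
      simp only [ρ]; field_simp; ring
    have hρpos : 0 < ρ := div_pos (neg_pos.mpr (hA.subdiag_neg m (by omega) (by omega))) hlast
    obtain ⟨v, hvpos, hv⟩ := ih (isHessenbergPMatrixOn_addColumn hA hρ)
    refine ⟨Function.update v (m + 1) (ρ * v m), fun k hk => ?_, fun i hi => ?_⟩
    · rcases eq_or_ne k (m + 1) with rfl | hk'
      · simpa using mul_pos hρpos (hvpos m (by simp; omega))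
      · simpa [hk'] using hvpos k (by simp at hk ⊢; omega)
    · rw [← sum_addColumn_mul (by omega)]
      rcases eq_or_ne i (m + 1) with rfl | hi'
      · rw [if_neg (by omega)]
        exact sum_eq_zero fun k hk => by rw [hA.addColumn_last_row_eq_zero hρ hk, zero_mul]
      · exact hv i (by simp at hi ⊢; omega)

theorem exists_pos_eq_mul (hA : IsHessenbergPMatrixOn A a e) (hae : a < e) {w : ℕ → ℝ} {c : ℝ}
    (hw : ∀ i ∈ Ico a e, ∑ k ∈ Ico a e, A i k * w k = if i = a then c else 0) :
    ∃ v : ℕ → ℝ, (∀ k ∈ Ico a e, 0 < v k) ∧ ∀ k ∈ Ico a e, w k = c * v k := by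
  obtain ⟨v, hvpos, hv⟩ := hA.exists_pos_solution hae
  refine ⟨v, hvpos, fun k hk => eqOn_of_sum_mul_eq (u := w) (v := fun k => c * v k)
    (hA.det_pos _ subset_rfl (nonempty_Ico.2 hae)).ne' (fun i hi => ?_) hk⟩
  simp_rw [hw i hi, mul_left_comm _ c, ← mul_sum, hv i hi, mul_ite, mul_one, mul_zero]

end IsHessenbergPMatrixOn

def natMatrix {d : ℕ} (R : Matrix (Fin d) (Fin d) ℝ) : ℕ → ℕ → ℝ :=
  fun i k => if h : i < d ∧ k < d then R ⟨i, h.1⟩ ⟨k, h.2⟩ else 0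

section natMatrix

variable {d : ℕ} {R : Matrix (Fin d) (Fin d) ℝ}

@[simp]
lemma natMatrix_val (R : Matrix (Fin d) (Fin d) ℝ) (i j : Fin d) : natMatrix R i j = R i j := by
  simp [natMatrix]

lemma IsPMatrix.det_principalSubmatrix_natMatrix_pos (hP : IsPMatrix R) {D : Finset ℕ}
    (hD : ∀ i ∈ D, i < d) (hne : D.Nonempty) :
    0 < (principalSubmatrix (natMatrix R) D).det := by
  let e : D.attachFin hD ≃ D :=
    { toFun := fun q => ⟨q.1, (mem_attachFin hD).mp q.2⟩
      invFun := fun p => ⟨⟨p, hD p p.2⟩, (mem_attachFin hD).mpr p.2⟩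
      left_inv := fun _ => rfl
      right_inv := fun _ => rfl }
  have hsubmatrix : principalSubmatrix (natMatrix R) D =
      (R.submatrix (fun i : D.attachFin hD => (i : Fin d))
        (fun j : D.attachFin hD => (j : Fin d))).submatrix e.symm e.symm := by
    ext p q
    simp [principalSubmatrix, natMatrix, hD p p.2, hD q q.2, e]
  rw [hsubmatrix, Matrix.det_submatrix_equiv_self]
  obtain ⟨i, hi⟩ := hne
  exact hP _ ⟨⟨i, hD i hi⟩, (mem_attachFin hD).mpr hi⟩

lemma IsPMatrix.isHessenbergPMatrixOn_natMatrix (hP : IsPMatrix R)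
    (hsub : ∀ i j : Fin d, (j : ℕ) + 1 = (i : ℕ) → R i j < 0)
    (hzero : ∀ i j : Fin d, (j : ℕ) + 2 ≤ (i : ℕ) → R i j = 0) :
    IsHessenbergPMatrixOn (natMatrix R) 0 d where
  det_pos D hD := hP.det_principalSubmatrix_natMatrix_pos fun i hi => (mem_Ico.mp (hD hi)).2
  subdiag_neg k _ hk := (natMatrix_val R ⟨k + 1, hk⟩ ⟨k, by omega⟩).trans_lt (hsub _ _ rfl)
  eq_zero i k _ hki hi := (natMatrix_val R ⟨i, hi⟩ ⟨k, by omega⟩).trans (hzero _ _ hki)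

end natMatrix

def suffix (d a : ℕ) : Finset (Fin d) := {i | a ≤ (i : ℕ)}

section suffix

variable {d a : ℕ}

@[simp]
lemma mem_suffix {i : Fin d} : i ∈ suffix d a ↔ a ≤ i := by simp [suffix]

lemma suffix_zero : suffix d 0 = univ := by ext; simp

lemma suffix_self : suffix d d = ∅ := by ext i; simp [i.isLt]

lemma suffix_succ_subset : suffix d (a + 1) ⊆ suffix d a := fun i hi => by
  simp at hi ⊢; omega

lemma erase_suffix (ha : a < d) : (suffix d a).erase ⟨a, ha⟩ = suffix d (a + 1) := by
  ext i; simp [Fin.ext_iff]; omega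

end suffix

structure IsTightSolution {d : ℕ} (R : Matrix (Fin d) (Fin d) ℝ) (b : Fin d → ℝ)
    (x : Finset (Fin d) → ℝ) (xj : Fin d → Finset (Fin d) → ℝ) : Prop where
  balance : ∀ (D : Finset (Fin d)) (i : Fin d), i ∈ D → ∑ j, R i j * b j * (xj j D - x D) = 0
  antitone_x : Antitone x
  antitone_xj : ∀ j, Antitone (xj j)
  xj_erase : ∀ (j : Fin d) (D : Finset (Fin d)), j ∈ D → xj j D = xj j (D.erase j)
  x_empty : x ∅ = 1
  xj_empty : ∀ j, xj j ∅ = 1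

def slack {d : ℕ} (b : Fin d → ℝ) (x : Finset (Fin d) → ℝ) (xj : Fin d → Finset (Fin d) → ℝ)
    (a k : ℕ) : ℝ :=
  if hk : k < d then b ⟨k, hk⟩ * (xj ⟨k, hk⟩ (suffix d a) - x (suffix d a)) else 0

/-- The equations of the system at `D = suffix d a` see the columns `k < a` only through
row `a`; this is their contribution, moved to the right-hand side. -/
def inflow {d : ℕ} (R : Matrix (Fin d) (Fin d) ℝ) (b : Fin d → ℝ) (x : Finset (Fin d) → ℝ)
    (xj : Fin d → Finset (Fin d) → ℝ) (a : ℕ) : ℝ :=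
  -∑ k ∈ range a, natMatrix R a k * slack b x xj a k

section slack

variable {d : ℕ} {R : Matrix (Fin d) (Fin d) ℝ} {b : Fin d → ℝ} {x : Finset (Fin d) → ℝ}
  {xj : Fin d → Finset (Fin d) → ℝ}

lemma slack_val (a : ℕ) (j : Fin d) :
    slack b x xj a j = b j * (xj j (suffix d a) - x (suffix d a)) := by
  simp [slack]

lemma inflow_succ (hR : IsHessenbergPMatrixOn (natMatrix R) 0 d) {a : ℕ} (ha : a + 1 < d) :
    inflow R b x xj (a + 1) = -(natMatrix R (a + 1) a * slack b x xj (a + 1) a) := by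
  rw [inflow, sum_range_succ, sum_eq_zero fun k hk => by
    rw [hR.eq_zero _ _ (Nat.zero_le _) (by simp at hk; omega) ha, zero_mul], zero_add]

end slack

namespace IsTightSolution

variable {d : ℕ} {R : Matrix (Fin d) (Fin d) ℝ} {b : Fin d → ℝ} {x : Finset (Fin d) → ℝ}
  {xj : Fin d → Finset (Fin d) → ℝ}

lemma x_le_one (h : IsTightSolution R b x xj) (D : Finset (Fin d)) : x D ≤ 1 :=
  h.x_empty ▸ h.antitone_x (empty_subset D)

lemma xj_le_one (h : IsTightSolution R b x xj) (j : Fin d) (D : Finset (Fin d)) : xj j D ≤ 1 :=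
  h.xj_empty j ▸ h.antitone_xj j (empty_subset D)

lemma sum_Ico_eq_inflow (h : IsTightSolution R b x xj)
    (hR : IsHessenbergPMatrixOn (natMatrix R) 0 d) {a : ℕ} {i : Fin d} (hai : a ≤ i) :
    ∑ k ∈ Ico a d, natMatrix R i k * slack b x xj a k =
      if (i : ℕ) = a then inflow R b x xj a else 0 := by
  have hbal := h.balance (suffix d a) i (mem_suffix.mpr hai)
  simp_rw [mul_assoc, ← slack_val, ← natMatrix_val R i] at hbal
  rw [Fin.sum_univ_eq_sum_range (fun k => natMatrix R i k * slack b x xj a k),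
    ← sum_range_add_sum_Ico _ (hai.trans i.isLt.le)] at hbal
  split_ifs with hia
  · subst hia; simp only [inflow]; linarith
  · rwa [sum_eq_zero fun k hk => by
      rw [hR.eq_zero _ _ (Nat.zero_le _) (by simp at hk; omega) i.isLt, zero_mul], zero_add] at hbal

lemma slack_succ_self_le (h : IsTightSolution R b x xj) (hb : ∀ j, 0 < b j) {a : ℕ}
    (ha : a < d) : slack b x xj (a + 1) a ≤ slack b x xj a a := by
  have hxj : xj ⟨a, ha⟩ (suffix d (a + 1)) = xj ⟨a, ha⟩ (suffix d a) := by
    rw [← erase_suffix ha, ← h.xj_erase _ _ (by simp)]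
  rw [slack_val (j := ⟨a, ha⟩), slack_val (j := ⟨a, ha⟩), hxj]
  gcongr
  · exact (hb _).le
  · exact h.antitone_x suffix_succ_subset

lemma exists_slack_eq_inflow_mul (h : IsTightSolution R b x xj)
    (hR : IsHessenbergPMatrixOn (natMatrix R) 0 d) {a : ℕ} (ha : a < d) :
    ∃ v : ℕ → ℝ, (∀ k ∈ Ico a d, 0 < v k) ∧
      ∀ k ∈ Ico a d, slack b x xj a k = inflow R b x xj a * v k :=
  (hR.mono_left a.zero_le).exists_pos_eq_mul ha fun i hi =>
    h.sum_Ico_eq_inflow hR (i := ⟨i, (mem_Ico.mp hi).2⟩) (mem_Ico.mp hi).1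

lemma inflow_nonpos (h : IsTightSolution R b x xj) (hb : ∀ j, 0 < b j)
    (hR : IsHessenbergPMatrixOn (natMatrix R) 0 d) : ∀ a < d, inflow R b x xj a ≤ 0
  | 0, _ => by simp [inflow]
  | a + 1, ha => by
    obtain ⟨v, hvpos, hv⟩ := h.exists_slack_eq_inflow_mul hR (a := a) (by omega)
    have hslack : slack b x xj (a + 1) a ≤ 0 := by
      refine (h.slack_succ_self_le hb (by omega)).trans ?_
      rw [hv a (by simp; omega)]
      exact mul_nonpos_of_nonpos_of_nonneg (h.inflow_nonpos hb hR a (by omega))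
        (hvpos a (by simp; omega)).le
    rw [inflow_succ hR ha, neg_nonpos]
    exact mul_nonneg_of_nonpos_of_nonpos (hR.subdiag_neg a a.zero_le ha).le hslack

lemma eq_one_on_suffix_of_succ (h : IsTightSolution R b x xj) (hb : ∀ j, 0 < b j)
    (hR : IsHessenbergPMatrixOn (natMatrix R) 0 d) {a : ℕ} (ha : a < d)
    (hsucc : x (suffix d (a + 1)) = 1 ∧
      ∀ k : Fin d, a + 1 ≤ k + 1 → xj k (suffix d (a + 1)) = 1) :
    x (suffix d a) = 1 ∧ ∀ k : Fin d, a ≤ k + 1 → xj k (suffix d a) = 1 := by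
  obtain ⟨v, hvpos, hv⟩ := h.exists_slack_eq_inflow_mul hR ha
  have hxja : xj ⟨a, ha⟩ (suffix d a) = 1 := by
    rw [h.xj_erase _ _ (by simp), erase_suffix ha]
    exact hsucc.2 _ le_rfl
  have hslack_nonneg : 0 ≤ inflow R b x xj a * v a := by
    rw [← hv a (by simp [ha]), slack_val (j := ⟨a, ha⟩), hxja]
    exact mul_nonneg (hb _).le (sub_nonneg.mpr (h.x_le_one _))
  have hinflow : inflow R b x xj a = 0 :=
    le_antisymm (h.inflow_nonpos hb hR a ha)
      (nonneg_of_mul_nonneg_left hslack_nonneg (hvpos a (by simp [ha])))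
  have hxa : x (suffix d a) = 1 := by
    have hslack := hv a (by simp [ha])
    rw [hinflow, zero_mul, slack_val (j := ⟨a, ha⟩), hxja, mul_eq_zero, sub_eq_zero] at hslack
    exact (hslack.resolve_left (hb _).ne').symm
  have hxj_of_slack : ∀ k : Fin d, slack b x xj a k = 0 → xj k (suffix d a) = 1 := by
    intro k hk
    rw [slack_val, hxa, mul_eq_zero, sub_eq_zero] at hk
    exact hk.resolve_left (hb k).ne'
  refine ⟨hxa, fun k hk => hxj_of_slack k ?_⟩
  rcases (show a ≤ k ∨ (k : ℕ) + 1 = a by omega) with hak | rfl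
  · rw [hv k (by simp [hak]), hinflow, zero_mul]
  · rw [inflow_succ hR ha, neg_eq_zero, mul_eq_zero] at hinflow
    exact hinflow.resolve_left (hR.subdiag_neg k (Nat.zero_le _) ha).ne

lemma eq_one_on_suffix (h : IsTightSolution R b x xj) (hb : ∀ j, 0 < b j)
    (hR : IsHessenbergPMatrixOn (natMatrix R) 0 d) {a : ℕ} (ha : a ≤ d) :
    x (suffix d a) = 1 ∧ ∀ k : Fin d, a ≤ k + 1 → xj k (suffix d a) = 1 := by
  induction ha using Nat.decreasingInduction with
  | self => exact ⟨suffix_self ▸ h.x_empty, fun k _ => suffix_self ▸ h.xj_empty k⟩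
  | of_succ a ha ih => exact h.eq_one_on_suffix_of_succ hb hR ha ih

theorem eq_one (h : IsTightSolution R b x xj) (hb : ∀ j, 0 < b j)
    (hR : IsHessenbergPMatrixOn (natMatrix R) 0 d) :
    (∀ D, x D = 1) ∧ ∀ j D, xj j D = 1 := by
  obtain ⟨hx, hxj⟩ := h.eq_one_on_suffix hb hR d.zero_le
  rw [suffix_zero] at hx hxj
  exact ⟨fun D => le_antisymm (h.x_le_one D) (hx ▸ h.antitone_x (subset_univ D)),
    fun j D => le_antisymm (h.xj_le_one j D) (hxj j (by omega) ▸ h.antitone_xj j (subset_univ D))⟩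

end IsTightSolution

theorem stmt_6_general {d : ℕ} (R : Matrix (Fin d) (Fin d) ℝ)
    (hP : IsPMatrix R)
    (hsub : ∀ i j : Fin d, (j : ℕ) + 1 = (i : ℕ) → R i j < 0)
    (hzero : ∀ i j : Fin d, (j : ℕ) + 2 ≤ (i : ℕ) → R i j = 0) :
    ∀ b : Fin d → ℝ, (∀ j, 0 < b j) → IsTightSystem R b := by
  intro b hb x xj _ hbalance hx hxj herase hx_empty hxj_empty
  exact IsTightSolution.eq_one
    ⟨hbalance, fun D D' => hx D D', fun j D D' => hxj j D D', herase, hx_empty, hxj_empty⟩ hb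
    (hP.isHessenbergPMatrixOn_natMatrix hsub hzero)

/-- A `d × d` P-matrix with positive diagonal, negative
subdiagonal entries, vanishing entries below the subdiagonal (and arbitrary
entries above the diagonal) is a tight matrix. -/
theorem stmt_6 {d : ℕ} (R : Matrix (Fin d) (Fin d) ℝ)
    (hP : IsPMatrix R)
    (hdiag : ∀ i, 0 < R i i)
    (hsub : ∀ i j : Fin d, (j : ℕ) + 1 = (i : ℕ) → R i j < 0)
    (hzero : ∀ i j : Fin d, (j : ℕ) + 2 ≤ (i : ℕ) → R i j = 0) :
    ∀ b : Fin d → ℝ, (∀ j, 0 < b j) → IsTightSystem R b :=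
  stmt_6_general R hP hsub hzero
end

section
/- For a d×d P-matrix R of the lower-Hessenberg-transpose form (R_{ii} > 0, R_{i,i−1} < 0 for 2 ≤ i ≤ d, R_{ij} = 0 for j ≤ i−2), the following holds: if r ∈ ℝ^d satisfies R_{21} r₁ e₁ + R_{D,D} r_D = 0 where D = {2,…,d}, R_{D,D} is the principal submatrix of R on D, r_D = (r₂,…,r_d), e₁ is the first standard basis vector of ℝ^{d−1}, and r₁ < 0, then r₂ < 0. -/
open Matrix

namespace IsPMatrix

variable {n : ℕ} {R : Matrix (Fin n) (Fin n) ℝ}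

theorem det_submatrix_pos (hP : IsPMatrix R) {ι : Type*} [Fintype ι] [DecidableEq ι]
    {f : ι → Fin n} (hf : Function.Injective f) : 0 < (R.submatrix f f).det := by
  cases isEmpty_or_nonempty ι with
  | inl _ => simp
  | inr _ =>
    let D : Finset (Fin n) := Finset.univ.image f
    have hD : D.Nonempty := Finset.univ_nonempty.image f
    let e : ι ≃ D := Equiv.ofBijective (fun i => ⟨f i, Finset.mem_image_of_mem f (by simp)⟩)
      ⟨fun i j hij => hf (congrArg Subtype.val hij), fun ⟨y, hy⟩ => by
        obtain ⟨i, -, rfl⟩ := Finset.mem_image.mp hy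
        exact ⟨i, rfl⟩⟩
    have hsub : R.submatrix f f =
        (R.submatrix (fun i : D => (i : Fin n)) (fun j : D => (j : Fin n))).submatrix e e := rfl
    rw [hsub, det_submatrix_equiv_self]
    exact hP D hD

theorem submatrix (hP : IsPMatrix R) {m : ℕ} {f : Fin m → Fin n} (hf : Function.Injective f) :
    IsPMatrix (R.submatrix f f) := fun _ _ => by
  rw [submatrix_submatrix]
  exact hP.det_submatrix_pos (hf.comp Subtype.val_injective)

theorem det_pos (hP : IsPMatrix R) : 0 < R.det := by
  simpa using hP.det_submatrix_pos Function.injective_id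

end IsPMatrix

theorem Matrix.det_mul_eq_adjugate_mul_of_mulVec_eq_single {ι α : Type*} [Fintype ι]
    [DecidableEq ι] [CommRing α] {A : Matrix ι ι α} {x : ι → α} {j : ι} {c : α}
    (h : A *ᵥ x = Pi.single j c) (i : ι) : A.det * x i = A.adjugate i j * c := by
  have hx : A.adjugate *ᵥ (A *ᵥ x) = A.det • x := by
    rw [mulVec_mulVec, adjugate_mul, smul_mulVec, one_mulVec]
  rw [h] at hx
  simpa [mulVec_single, mul_comm] using (congrFun hx i).symm

theorem Matrix.submatrix_succ_mulVec_tail {l m α : Type*} [CommRing α] {n : ℕ}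
    (R : Matrix m (Fin (n + 1)) α) (f : l → m) (r : Fin (n + 1) → α) (i : l) :
    (R.submatrix f Fin.succ *ᵥ Fin.tail r) i = (R *ᵥ r) (f i) - R (f i) 0 * r 0 := by
  simp only [mulVec, dotProduct, submatrix_apply, Fin.tail, Fin.sum_univ_succ (n := n)]
  ring

namespace IsPMatrix

variable {n : ℕ} {R : Matrix (Fin (n + 1)) (Fin (n + 1)) ℝ}

theorem adjugate_self_pos (hP : IsPMatrix R) (i : Fin (n + 1)) : 0 < R.adjugate i i := by
  rw [adjugate_fin_succ_eq_det_submatrix, ← two_mul, pow_mul, neg_one_sq, one_pow, one_mul]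
  exact hP.det_submatrix_pos Fin.succAbove_right_injective

theorem neg_of_mulVec_eq_single (hP : IsPMatrix R) {x : Fin (n + 1) → ℝ} {i : Fin (n + 1)}
    {c : ℝ} (hc : c < 0) (h : R *ᵥ x = Pi.single i c) : x i < 0 := by
  have hneg : R.det * x i < 0 := by
    rw [det_mul_eq_adjugate_mul_of_mulVec_eq_single h]
    exact mul_neg_of_pos_of_neg (hP.adjugate_self_pos i) hc
  exact neg_of_mul_neg_right hneg hP.det_pos.le

end IsPMatrix

theorem stmt_15_general {d : ℕ} (R : Matrix (Fin (d + 2)) (Fin (d + 2)) ℝ)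
    (hP : IsPMatrix R)
    (hsub : ∀ i j : Fin (d + 2), (j : ℕ) + 1 = (i : ℕ) → R i j < 0)
    (hzero : ∀ i j : Fin (d + 2), (j : ℕ) + 2 ≤ (i : ℕ) → R i j = 0)
    (r : Fin (d + 2) → ℝ)
    (heq : ∀ i : Fin (d + 2), i ≠ 0 → R.mulVec r i = 0)
    (hr1 : r 0 < 0) :
    r 1 < 0 := by
  have hc : -(R 1 0 * r 0) < 0 := 
    neg_neg_of_pos (mul_pos_of_neg_of_neg (hsub 1 0 (by simp)) hr1)
  have hD : R.submatrix Fin.succ Fin.succ *ᵥ Fin.tail r = Pi.single 0 (-(R 1 0 * r 0)) := by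
    funext i
    rw [submatrix_succ_mulVec_tail, heq _ i.succ_ne_zero]
    cases i using Fin.cases with
    | zero => simp
    | succ i =>
      rw [hzero _ _ (by simp), Pi.single_eq_of_ne i.succ_ne_zero]
      ring
  simpa [Fin.tail] using (hP.submatrix (Fin.succ_injective _)).neg_of_mulVec_eq_single hc hD

/-- For a P-matrix `R` (dimension `d + 2 ≥ 2`) with
positive diagonal, negative subdiagonal and vanishing entries below the
subdiagonal, if `r` satisfies `R₂₁ r₁ e₁ + R_{D,D} r_D = 0` with
`D = {2,…,d}` (equivalently `(R r)_i = 0` for all `i ≠ 1`, since the entries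
of `R` below the subdiagonal vanish) and `r₁ < 0`, then `r₂ < 0`. -/
theorem stmt_15 {d : ℕ} (R : Matrix (Fin (d + 2)) (Fin (d + 2)) ℝ)
    (hP : IsPMatrix R)
    (hdiag : ∀ i, 0 < R i i)
    (hsub : ∀ i j : Fin (d + 2), (j : ℕ) + 1 = (i : ℕ) → R i j < 0)
    (hzero : ∀ i j : Fin (d + 2), (j : ℕ) + 2 ≤ (i : ℕ) → R i j = 0)
    (r : Fin (d + 2) → ℝ)
    (heq : ∀ i : Fin (d + 2), i ≠ 0 → R.mulVec r i = 0)
    (hr1 : r 0 < 0) :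
    r 1 < 0 :=
  stmt_15_general R hP hsub hzero r heq hr1
end
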